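/- arXiv:2604.20172 — 5 statements merged into one kernel-verified Lean document; each statement's English description precedes it below -/
import Mathlib

section
/- For all real λ with |λ| < 1 and all real x with |x| ≤ 1, ln(1 - λx) ≥ -λx + x² · (ln(1 - |λ|) + |λ|). -/
open Real Set

lemma lemA (a : ℝ) (ha0 : 0 < a) (ha1 : a < 1) :
    Real.log (1 - a) + a + a ^ 2 / 2 ≤ 0 := by
  have h : StrictAntiOn (fun t : ℝ => Real.log (1 - t) + t + t ^ 2 / 2) (Set.Icc 0 a) := by
    apply strictAntiOn_of_deriv_neg (convex_Icc 0 a)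
    · apply ContinuousOn.add
      · apply ContinuousOn.add
        · exact (continuousOn_const.sub continuousOn_id).log
            (fun t ht => by have := ht.2; intro h; simp only [Pi.sub_apply, id_eq] at h; linarith [sub_eq_zero.mp h])
        · exact continuousOn_id
      · exact (continuousOn_pow 2).div_const 2
    · intro t ht
      rw [interior_Icc] at ht
      have ht1 : t < 1 := lt_trans ht.2 ha1
      have h1 : (1 : ℝ) - t ≠ 0 := by intro h; linarith [sub_eq_zero.mp h]
      have d1 : HasDerivAt (fun t : ℝ => 1 - t) (-1) t := by
        simpa using (hasDerivAt_id t).const_sub 1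
      have d2 := (Real.hasDerivAt_log h1).comp t d1
      have d3 : HasDerivAt (fun t : ℝ => Real.log (1 - t) + t + t ^ 2 / 2)
          ((1 - t)⁻¹ * (-1) + 1 + 2 * t / 2) t := by
        exact (d2.add (hasDerivAt_id t)).add (by simpa using (hasDerivAt_pow 2 t).div_const 2)
      rw [d3.deriv]
      have hmul : (1 - t) * (1 - t)⁻¹ = 1 := mul_inv_cancel₀ h1
      nlinarith [ht.1, sq_nonneg t, mul_pos ht.1 ht.1]
  have h2 := h (Set.left_mem_Icc.mpr ha0.le) (Set.right_mem_Icc.mpr ha0.le) ha0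
  simpa using h2.le

theorem stmt_3 (l x : ℝ) (hl : |l| < 1) (hx : |x| ≤ 1) :
    Real.log (1 - l * x) ≥ -(l * x) + x ^ 2 * (Real.log (1 - |l|) + |l|) := by
  rcases eq_or_ne l 0 with h0 | h0
  · simp [h0]
  set a := |l| with ha
  have ha0 : 0 < a := abs_pos.mpr h0
  have ha1 : a < 1 := hl
  have ha2 : a ^ 2 ≠ 0 := pow_ne_zero 2 (ne_of_gt ha0)
  set K := Real.log (1 - a) + a with hKdef
  have hK : K ≤ -(a ^ 2) / 2 := by have := lemA a ha0 ha1; simp only [hKdef]; linarith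
  set c : ℝ := -(2 * K) / a ^ 2 with hcdef
  have hc1 : 1 ≤ c := by
    rw [hcdef, le_div_iff₀ (by positivity)]
    linarith
  set F : ℝ → ℝ := fun y => Real.log (1 - y) + y + c / 2 * y ^ 2 with hFdef
  -- derivative of F
  have hder : ∀ t : ℝ, t < 1 → HasDerivAt F ((-t) * ((1 - t)⁻¹ - c)) t := by
    intro t ht1
    have h1 : (1 : ℝ) - t ≠ 0 := by intro h; linarith [sub_eq_zero.mp h]
    have d1 : HasDerivAt (fun t : ℝ => 1 - t) (-1) t := by
      simpa using (hasDerivAt_id t).const_sub 1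
    have d2 := (Real.hasDerivAt_log h1).comp t d1
    have d3 : HasDerivAt F ((1 - t)⁻¹ * (-1) + 1 + c / 2 * (2 * t)) t := by
      exact (d2.add (hasDerivAt_id t)).add
        (by simpa using ((hasDerivAt_pow 2 t).const_mul (c / 2)))
    convert d3 using 1
    have hmul : (1 - t) * (1 - t)⁻¹ = 1 := mul_inv_cancel₀ h1
    field_simp
    ring
  have hcont : ∀ s : Set ℝ, (∀ t ∈ s, t < 1) → ContinuousOn F s := by
    intro s hs
    apply ContinuousOn.add
    · apply ContinuousOn.add
      · exact (continuousOn_const.sub continuousOn_id).log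
          (fun t ht => by have := hs t ht; intro h; simp only [Pi.sub_apply, id_eq] at h; linarith [sub_eq_zero.mp h])
      · exact continuousOn_id
    · exact continuousOn_const.mul (continuousOn_pow 2)
  have hF0 : F 0 = 0 := by simp [hFdef]
  have hFa : F a = 0 := by
    have : c / 2 * a ^ 2 = -K := by rw [hcdef]; field_simp
    simp only [hFdef]; rw [this, hKdef]; ring
  -- key: F y ≥ 0 on [-a, a]
  have key : ∀ y ∈ Set.Icc (-a) a, 0 ≤ F y := by
    intro y hy
    have hy1 : y < 1 := lt_of_le_of_lt hy.2 ha1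
    rcases lt_trichotomy y 0 with hneg | hzero | hpos
    · -- F strictly decreasing on [y, 0]
      have hanti : StrictAntiOn F (Set.Icc y 0) := by
        apply strictAntiOn_of_deriv_neg (convex_Icc y 0)
        · exact hcont _ (fun t ht => lt_of_le_of_lt ht.2 one_pos)
        · intro t ht
          rw [interior_Icc] at ht
          have ht1 : t < 1 := lt_trans ht.2 one_pos
          rw [(hder t ht1).deriv]
          have hinv : (1 - t)⁻¹ < 1 := by
            rw [inv_lt_one_iff₀]; right; linarith [ht.2]
          have : (1 - t)⁻¹ - c < 0 := by linarith
          nlinarith [ht.2]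
      have := hanti (Set.left_mem_Icc.mpr hneg.le) (Set.right_mem_Icc.mpr hneg.le) hneg
      rw [hF0] at this
      exact this.le
    · rw [hzero, hF0]
    · rcases le_or_gt ((1 - y)⁻¹) c with hcase | hcase
      · -- F strictly increasing on [0, y]
        have hmono : StrictMonoOn F (Set.Icc 0 y) := by
          apply strictMonoOn_of_deriv_pos (convex_Icc 0 y)
          · exact hcont _ (fun t ht => lt_of_le_of_lt ht.2 hy1)
          · intro t ht
            rw [interior_Icc] at ht
            have ht1 : t < 1 := lt_trans ht.2 hy1
            rw [(hder t ht1).deriv]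
            have hinv : (1 - t)⁻¹ < (1 - y)⁻¹ := by
              apply inv_strictAnti₀ (by linarith) (by linarith [ht.2])
            have h2 : (1 - t)⁻¹ - c < 0 := by linarith
            nlinarith [ht.1]
        have := hmono (Set.left_mem_Icc.mpr hpos.le) (Set.right_mem_Icc.mpr hpos.le) hpos
        rw [hF0] at this
        exact this.le
      · -- (1-y)⁻¹ > c, so y < a necessarily or y = a; F decreasing on [y, a]
        rcases eq_or_lt_of_le hy.2 with heq | hlt
        · rw [heq, hFa]
        · have hanti : StrictAntiOn F (Set.Icc y a) := by
            apply strictAntiOn_of_deriv_neg (convex_Icc y a)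
            · exact hcont _ (fun t ht => lt_of_le_of_lt ht.2 ha1)
            · intro t ht
              rw [interior_Icc] at ht
              have ht1 : t < 1 := lt_trans ht.2 ha1
              rw [(hder t ht1).deriv]
              have hinv : (1 - y)⁻¹ < (1 - t)⁻¹ := by
                apply inv_strictAnti₀ (by linarith) (by linarith [ht.1])
              have h2 : 0 < (1 - t)⁻¹ - c := by linarith
              have htpos : 0 < t := lt_trans hpos ht.1
              nlinarith
          have := hanti (Set.left_mem_Icc.mpr hlt.le) (Set.right_mem_Icc.mpr hlt.le) hlt
          rw [hFa] at this
          exact this.le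
  -- apply at y = l * x
  have hmem : l * x ∈ Set.Icc (-a) a := by
    rw [Set.mem_Icc, ← abs_le, abs_mul]
    calc |l| * |x| ≤ |l| * 1 := by
          exact mul_le_mul_of_nonneg_left hx (abs_nonneg l)
      _ = a := by rw [mul_one]
  have hkey := key (l * x) hmem
  have hrw : c / 2 * (l * x) ^ 2 = -(x ^ 2 * K) := by
    rw [hcdef, mul_pow]
    have : l ^ 2 = a ^ 2 := (sq_abs l).symm
    rw [this]
    field_simp
  simp only [hFdef] at hkey
  rw [hrw] at hkey
  rw [ge_iff_le, hKdef] at *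
  linarith
end

section
/- Let X_1, …, X_n ∈ [0,1], m_0 ∈ (0,1), S_n = Σ(X_i - m_0), V_n = Σ(X_i - m_0)² > 0, and let λ*_n be an interior maximizer (in (-1/m_0, 1/(1-m_0))) of f_n(λ) = Σ ln(1 - λ(X_i - m_0)). Let α_n = 1-m_0 if λ*_n > 0 and α_n = m_0 if λ*_n < 0, and β_n = m_0 if λ*_n > 0 and β_n = 1-m_0 if λ*_n < 0. Then (|S_n|/V_n)(1 - α_n|λ*_n|)² ≤ |λ*_n| ≤ (|S_n|/V_n)(1 + β_n|λ*_n|)². -/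
theorem stmt_8 (n : ℕ) (X : Fin n → ℝ) (m0 : ℝ)
    (hm0 : m0 ∈ Set.Ioo (0 : ℝ) 1) (hX : ∀ i, X i ∈ Set.Icc (0 : ℝ) 1)
    (S V : ℝ) (hS : S = ∑ i, (X i - m0)) (hV : V = ∑ i, (X i - m0) ^ 2) (hVpos : 0 < V)
    (lstar : ℝ)
    (hmax : IsMaxOn (fun l : ℝ => ∑ i, Real.log (1 - l * (X i - m0)))
      (Set.Icc (-(1 / m0)) (1 / (1 - m0))) lstar)
    (hint : lstar ∈ Set.Ioo (-(1 / m0)) (1 / (1 - m0))) (hne : lstar ≠ 0)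
    (α β : ℝ)
    (hα : (0 < lstar → α = 1 - m0) ∧ (lstar < 0 → α = m0))
    (hβ : (0 < lstar → β = m0) ∧ (lstar < 0 → β = 1 - m0)) :
    (|S| / V) * (1 - α * |lstar|) ^ 2 ≤ |lstar| ∧
      |lstar| ≤ (|S| / V) * (1 + β * |lstar|) ^ 2 := by
  obtain ⟨hm1, hm2⟩ := hm0
  obtain ⟨hi1, hi2⟩ := hint
  have hm1' : (0:ℝ) < 1 - m0 := by linarith
  set a : Fin n → ℝ := fun i => X i - m0 with ha
  have haL : ∀ i, -m0 ≤ a i := fun i => by have := (hX i).1; simp only [ha]; linarith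
  have haU : ∀ i, a i ≤ 1 - m0 := fun i => by have := (hX i).2; simp only [ha]; linarith
  set L : ℝ := |lstar| with hL
  -- basic case facts
  have hfacts : 0 ≤ α ∧ 0 ≤ β ∧ 0 < 1 - α * L ∧
      (∀ i, 1 - α * L ≤ 1 - lstar * a i ∧ 1 - lstar * a i ≤ 1 + β * L) := by
    rcases hne.lt_or_gt with h | h
    · have hα' := hα.2 h
      have hβ' := hβ.2 h
      have hLe : L = -lstar := abs_of_neg h
      have hlt : m0 * (-lstar) < 1 := by
        have : -lstar < 1 / m0 := by linarith
        calc m0 * (-lstar) < m0 * (1/m0) := by exact mul_lt_mul_of_pos_left this hm1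
          _ = 1 := by field_simp
      refine ⟨by linarith, by linarith, by rw [hα', hLe]; linarith, fun i => ?_⟩
      have h1 : (a i + m0) * lstar ≤ 0 :=
        mul_nonpos_of_nonneg_of_nonpos (by linarith [haL i]) h.le
      have h2 : (1 - m0 - a i) * lstar ≤ 0 :=
        mul_nonpos_of_nonneg_of_nonpos (by linarith [haU i]) h.le
      constructor
      · rw [hα', hLe]; nlinarith
      · rw [hβ', hLe]; nlinarith
    · have hα' := hα.1 h
      have hβ' := hβ.1 h
      have hLe : L = lstar := abs_of_pos h
      have hlt : (1 - m0) * lstar < 1 := by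
        have : lstar < 1 / (1 - m0) := hi2
        calc (1 - m0) * lstar < (1 - m0) * (1/(1 - m0)) := by
              exact mul_lt_mul_of_pos_left this hm1'
          _ = 1 := by field_simp
      refine ⟨by linarith, by linarith, by rw [hα', hLe]; linarith, fun i => ?_⟩
      have h1 : (1 - m0 - a i) * lstar ≥ 0 := mul_nonneg (by linarith [haU i]) h.le
      have h2 : (a i + m0) * lstar ≥ 0 := mul_nonneg (by linarith [haL i]) h.le
      constructor
      · rw [hα', hLe]; nlinarith
      · rw [hβ', hLe]; nlinarith
  obtain ⟨hα0, hβ0, hden, hbnd⟩ := hfacts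
  have hd : ∀ i, 0 < 1 - lstar * a i := fun i => lt_of_lt_of_le hden (hbnd i).1
  -- first-order condition
  have hderiv : HasDerivAt (fun l : ℝ => ∑ i, Real.log (1 - l * a i))
      (∑ i, (-(a i) / (1 - lstar * a i))) lstar := by
    apply HasDerivAt.fun_sum
    intro i _
    have h1 : HasDerivAt (fun l : ℝ => 1 - l * a i) (-(a i)) lstar := by
      simpa using (hasDerivAt_mul_const (a i)).const_sub 1
    exact h1.log (ne_of_gt (hd i))
  have hloc : IsLocalMax (fun l : ℝ => ∑ i, Real.log (1 - l * a i)) lstar :=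
    hmax.isLocalMax (Icc_mem_nhds hi1 hi2)
  have hzero : (∑ i, (-(a i) / (1 - lstar * a i))) = 0 :=
    hloc.hasDerivAt_eq_zero hderiv
  have hzero' : (∑ i, a i / (1 - lstar * a i)) = 0 := by
    have : (∑ i, a i / (1 - lstar * a i)) = -∑ i, (-(a i) / (1 - lstar * a i)) := by
      rw [← Finset.sum_neg_distrib]; apply Finset.sum_congr rfl; intro i _; ring
    rw [this, hzero, neg_zero]
  set T : ℝ := ∑ i, (a i) ^ 2 / (1 - lstar * a i) with hT
  have hTnn : 0 ≤ T := Finset.sum_nonneg fun i _ => div_nonneg (sq_nonneg _) (hd i).le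
  have key : S = -(lstar * T) := by
    have h1 : ∀ i ∈ Finset.univ (α := Fin n),
        a i = a i / (1 - lstar * a i) - lstar * ((a i) ^ 2 / (1 - lstar * a i)) := by
      intro i _
      have hne' := (hd i).ne'
      rw [eq_sub_iff_add_eq, ← mul_div_assoc, add_div' _ _ _ hne', div_left_inj' hne']
      ring
    calc S = ∑ i, a i := hS
      _ = ∑ i, (a i / (1 - lstar * a i) - lstar * ((a i) ^ 2 / (1 - lstar * a i))) :=
          Finset.sum_congr rfl h1
      _ = (∑ i, a i / (1 - lstar * a i)) - lstar * T := by
          rw [Finset.sum_sub_distrib, Finset.mul_sum]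
      _ = -(lstar * T) := by rw [hzero']; ring
  have habsS : |S| = L * T := by
    rw [key, abs_neg, abs_mul, abs_of_nonneg hTnn]
  -- bounds on T
  have hVa : V = ∑ i, (a i) ^ 2 := hV
  have hT1 : T * (1 - α * L) ≤ V := by
    rw [hVa, hT, Finset.sum_mul]
    apply Finset.sum_le_sum
    intro i _
    have h := mul_le_mul_of_nonneg_left (hbnd i).1
      (div_nonneg (sq_nonneg (a i)) (hd i).le)
    calc (a i) ^ 2 / (1 - lstar * a i) * (1 - α * L)
        ≤ (a i) ^ 2 / (1 - lstar * a i) * (1 - lstar * a i) := h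
      _ = (a i) ^ 2 := div_mul_cancel₀ _ (hd i).ne'
  have hT2 : V ≤ T * (1 + β * L) := by
    rw [hVa, hT, Finset.sum_mul]
    apply Finset.sum_le_sum
    intro i _
    have h := mul_le_mul_of_nonneg_left (hbnd i).2
      (div_nonneg (sq_nonneg (a i)) (hd i).le)
    calc (a i) ^ 2 = (a i) ^ 2 / (1 - lstar * a i) * (1 - lstar * a i) :=
          (div_mul_cancel₀ _ (hd i).ne').symm
      _ ≤ (a i) ^ 2 / (1 - lstar * a i) * (1 + β * L) := h
  have hLnn : 0 ≤ L := abs_nonneg _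
  have hαL : 0 ≤ α * L := mul_nonneg hα0 hLnn
  have hβL : 0 ≤ β * L := mul_nonneg hβ0 hLnn
  constructor
  · rw [div_mul_eq_mul_div, div_le_iff₀ hVpos, habsS]
    have h1 : L * (T * (1 - α * L)) ≤ L * V := mul_le_mul_of_nonneg_left hT1 hLnn
    nlinarith [mul_le_mul_of_nonneg_right h1 hden.le,
      mul_nonneg (mul_nonneg hLnn hVpos.le) hαL]
  · rw [div_mul_eq_mul_div, le_div_iff₀ hVpos, habsS]
    have h1 : L * V ≤ L * (T * (1 + β * L)) := mul_le_mul_of_nonneg_left hT2 hLnn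
    nlinarith [mul_nonneg (mul_nonneg (mul_nonneg hLnn hTnn) hβL) hβL,
      mul_nonneg (mul_nonneg hLnn hTnn) hβL]
end

section
/- Under the assumptions of the previous statement (interior maximizer λ*_n ≠ 0, V_n > 0), with α_n = 1-m_0 if λ*_n > 0 and α_n = m_0 if λ*_n < 0: |λ*_n| ≥ |S_n| / (V_n + 2α_n|S_n|). -/
theorem stmt_9 (n : ℕ) (X : Fin n → ℝ) (m0 : ℝ)
    (hm0 : m0 ∈ Set.Ioo (0 : ℝ) 1) (hX : ∀ i, X i ∈ Set.Icc (0 : ℝ) 1)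
    (S V : ℝ) (hS : S = ∑ i, (X i - m0)) (hV : V = ∑ i, (X i - m0) ^ 2) (hVpos : 0 < V)
    (lstar : ℝ)
    (hmax : IsMaxOn (fun l : ℝ => ∑ i, Real.log (1 - l * (X i - m0)))
      (Set.Icc (-(1 / m0)) (1 / (1 - m0))) lstar)
    (hint : lstar ∈ Set.Ioo (-(1 / m0)) (1 / (1 - m0))) (hne : lstar ≠ 0)
    (α : ℝ) (hα : (0 < lstar → α = 1 - m0) ∧ (lstar < 0 → α = m0)) :
    |lstar| ≥ |S| / (V + 2 * α * |S|) := by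
  obtain ⟨hm0p, hm0l⟩ := hm0
  have hm1 : (0:ℝ) < 1 - m0 := by linarith
  obtain ⟨hl1, hl2⟩ := hint
  set a : Fin n → ℝ := fun i => X i - m0 with ha
  have hab : ∀ i, -m0 ≤ a i ∧ a i ≤ 1 - m0 := fun i => by
    obtain ⟨h1, h2⟩ := hX i; constructor <;> simp [ha] <;> linarith
  -- key sign facts
  have hαpos : 0 < α := by
    rcases lt_or_gt_of_ne hne with h | h
    · rw [hα.2 h]; exact hm0p
    · rw [hα.1 h]; exact hm1
  have hb1 : -1 < lstar * m0 := by
    have : (-1)/m0 < lstar := by rw [neg_div]; exact hl1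
    exact (div_lt_iff₀ hm0p).mp this
  have hb2 : lstar * (1 - m0) < 1 := (lt_div_iff₀ hm1).mp hl2
  have hαl : α * |lstar| < 1 := by
    rcases lt_or_gt_of_ne hne with h | h
    · rw [hα.2 h, abs_of_neg h]; nlinarith
    · rw [hα.1 h, abs_of_pos h]; nlinarith
  have hkey : ∀ i, lstar * a i ≤ α * |lstar| := by
    intro i
    obtain ⟨hb1, hb2⟩ := hab i
    rcases lt_or_gt_of_ne hne with h | h
    · rw [hα.2 h, abs_of_neg h]; nlinarith
    · rw [hα.1 h, abs_of_pos h]; nlinarith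
  have hden : ∀ i, 0 < 1 - lstar * a i := fun i => by
    have := hkey i; linarith [hαl]
  -- first order condition
  have hderiv : HasDerivAt (fun l : ℝ => ∑ i, Real.log (1 - l * a i))
      (∑ i, -(a i) / (1 - lstar * a i)) lstar := by
    apply HasDerivAt.fun_sum
    intro i _
    have h1 : HasDerivAt (fun l : ℝ => 1 - l * a i) (-(a i)) lstar := by
      simpa using ((hasDerivAt_id lstar).mul_const (a i)).const_sub 1
    exact h1.log (ne_of_gt (hden i))
  have hlocal : IsLocalMax (fun l : ℝ => ∑ i, Real.log (1 - l * a i)) lstar := by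
    apply hmax.isLocalMax
    exact Icc_mem_nhds hl1 hl2
  have hzero : (∑ i, -(a i) / (1 - lstar * a i)) = 0 := by
    rw [← hderiv.deriv]; exact hlocal.deriv_eq_zero
  have hsum0 : (∑ i, a i / (1 - lstar * a i)) = 0 := by
    have := hzero
    rw [← neg_eq_zero, ← Finset.sum_neg_distrib] at this ⊢
    · simpa [neg_div] using this
  -- S + lstar * T = 0 where T = Σ a²/(1-λa)
  set T : ℝ := ∑ i, (a i) ^ 2 / (1 - lstar * a i) with hT
  have hST : S + lstar * T = 0 := by
    rw [hS, hT, Finset.mul_sum, ← Finset.sum_add_distrib, ← hsum0]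
    apply Finset.sum_congr rfl
    intro i _
    have h := ne_of_gt (hden i)
    field_simp
    ring
  have hTnn : 0 ≤ T := by
    apply Finset.sum_nonneg
    intro i _
    exact div_nonneg (sq_nonneg _) (le_of_lt (hden i))
  have hTle : T ≤ V / (1 - α * |lstar|) := by
    rw [hV, div_eq_mul_inv, Finset.sum_mul]
    apply Finset.sum_le_sum
    intro i _
    rw [← div_eq_mul_inv]
    apply div_le_div_of_nonneg_left (sq_nonneg _) (by linarith [hαl])
    linarith [hkey i]
  have habs : |S| = |lstar| * T := by
    have hS' : S = -lstar * T := by linarith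
    rw [hS', abs_mul, abs_neg, abs_of_nonneg hTnn]
  have hmain : |S| * (1 - α * |lstar|) ≤ |lstar| * V := by
    rw [habs]
    have h1 : 0 < 1 - α * |lstar| := by linarith
    have := mul_le_mul_of_nonneg_left hTle (abs_nonneg lstar)
    calc |lstar| * T * (1 - α * |lstar|) ≤ |lstar| * (V / (1 - α * |lstar|)) * (1 - α * |lstar|) := by
          apply mul_le_mul_of_nonneg_right this (le_of_lt h1)
      _ = |lstar| * V := by field_simp; exact div_self (by rw [mul_comm]; exact ne_of_gt h1)
  -- conclude
  rw [ge_iff_le, div_le_iff₀ (by positivity)]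
  have h0 : 0 ≤ α * |lstar| * |S| := by positivity
  nlinarith [abs_nonneg S, abs_nonneg lstar]
end

section
/- Let X_1, …, X_n ∈ [0,1], m_0 ∈ (0,1), S_n = Σ(X_i - m_0), V_n = Σ(X_i - m_0)² > 0, and let λ*_n be an interior maximizer of f_n over [-1/m_0, 1/(1-m_0)] with associated constants α_n, β_n as above. Then the hindsight-optimal log-wealth satisfies ln W*_n := f_n(λ*_n) ≤ |λ*_n||S_n| ≤ S_n²/(α_n² V_n). In particular, if |S_n| < √(2V_n) then ln W*_n ≤ 2/α_n². -/
theorem stmt_12 (n : ℕ) (X : Fin n → ℝ) (m0 : ℝ)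
    (hm0 : m0 ∈ Set.Ioo (0 : ℝ) 1) (hX : ∀ i, X i ∈ Set.Icc (0 : ℝ) 1)
    (S V : ℝ) (hS : S = ∑ i, (X i - m0)) (hV : V = ∑ i, (X i - m0) ^ 2) (hVpos : 0 < V)
    (lstar : ℝ)
    (hmax : IsMaxOn (fun l : ℝ => ∑ i, Real.log (1 - l * (X i - m0)))
      (Set.Icc (-(1 / m0)) (1 / (1 - m0))) lstar)
    (hint : lstar ∈ Set.Ioo (-(1 / m0)) (1 / (1 - m0))) (hne : lstar ≠ 0)
    (α β : ℝ)
    (hα : (0 < lstar → α = 1 - m0) ∧ (lstar < 0 → α = m0))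
    (hβ : (0 < lstar → β = m0) ∧ (lstar < 0 → β = 1 - m0)) :
    (∑ i, Real.log (1 - lstar * (X i - m0)) ≤ |lstar| * |S| ∧
      |lstar| * |S| ≤ S ^ 2 / (α ^ 2 * V)) ∧
    (|S| < Real.sqrt (2 * V) → ∑ i, Real.log (1 - lstar * (X i - m0)) ≤ 2 / α ^ 2) := by
  obtain ⟨hm0a, hm0b⟩ := hm0
  obtain ⟨hl1, hl2⟩ := hint
  have hx1 : ∀ i, -m0 ≤ X i - m0 := fun i => by linarith [(hX i).1]
  have hx2 : ∀ i, X i - m0 ≤ 1 - m0 := fun i => by linarith [(hX i).2]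
  have h1m0 : 0 < 1 - m0 := by linarith
  -- positivity of denominators
  have hden : ∀ i, 0 < 1 - lstar * (X i - m0) := by
    intro i
    have hA : lstar * (1 - m0) < 1 := (lt_div_iff₀ h1m0).mp hl2
    have hB : -1 < lstar * m0 := by
      have h1 : -(1 / m0) * m0 < lstar * m0 := mul_lt_mul_of_pos_right hl1 hm0a
      have h2 : -(1/m0) * m0 = -1 := by field_simp
      linarith
    rcases le_or_gt lstar 0 with hl | hl
    · nlinarith [mul_nonneg (neg_nonneg.2 hl) (by linarith [hx1 i] : (0:ℝ) ≤ m0 + (X i - m0))]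
    · nlinarith [mul_nonneg hl.le (by linarith [hx2 i] : (0:ℝ) ≤ (1 - m0) - (X i - m0))]
  -- alpha facts
  have hαpos : 0 < α ∧ α < 1 ∧ ∀ i, α * (1 - lstar * (X i - m0)) < 1 := by
    rcases hne.lt_or_gt with hl | hl
    · rw [hα.2 hl]
      refine ⟨hm0a, hm0b, fun i => ?_⟩
      have hB : -1 < lstar * m0 := by
        have h1 : -(1 / m0) * m0 < lstar * m0 := mul_lt_mul_of_pos_right hl1 hm0a
        have h2 : -(1/m0) * m0 = -1 := by field_simp
        linarith
      nlinarith [mul_pos (by linarith : (0:ℝ) < 1 + lstar * m0) h1m0,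
        mul_nonneg hm0a.le (mul_nonneg (neg_nonneg.2 hl.le)
          (by linarith [hx2 i] : (0:ℝ) ≤ (1 - m0) - (X i - m0)))]
    · rw [hα.1 hl]
      refine ⟨h1m0, by linarith, fun i => ?_⟩
      have hA : lstar * (1 - m0) < 1 := (lt_div_iff₀ h1m0).mp hl2
      nlinarith [mul_pos hm0a (by linarith : (0:ℝ) < 1 - lstar * (1 - m0)),
        mul_nonneg (mul_nonneg hl.le h1m0.le)
          (by linarith [hx1 i] : (0:ℝ) ≤ (X i - m0) + m0)]
  obtain ⟨hαp, hαlt, hαkey⟩ := hαpos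
  -- derivative zero at lstar
  have hder : HasDerivAt (fun l : ℝ => ∑ i, Real.log (1 - l * (X i - m0)))
      (∑ i, -(X i - m0) / (1 - lstar * (X i - m0))) lstar := by
    apply HasDerivAt.fun_sum
    intro i _
    have h1 : HasDerivAt (fun l : ℝ => 1 - l * (X i - m0)) (-(X i - m0)) lstar := by
      simpa using ((hasDerivAt_id lstar).mul_const (X i - m0)).const_sub 1
    have h2 := (Real.hasDerivAt_log (hden i).ne').comp lstar h1
    exact h2.congr_deriv (by rw [div_eq_inv_mul])
  have hcrit : (∑ i, -(X i - m0) / (1 - lstar * (X i - m0))) = 0 := by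
    have hloc : IsLocalMax (fun l : ℝ => ∑ i, Real.log (1 - l * (X i - m0))) lstar :=
      hmax.isLocalMax (Icc_mem_nhds hl1 hl2)
    have h0 := hloc.deriv_eq_zero
    rw [hder.deriv] at h0
    exact h0
  have h0 : (∑ i, (X i - m0) / (1 - lstar * (X i - m0))) = 0 := by
    have : (∑ i, (X i - m0) / (1 - lstar * (X i - m0)))
        = -∑ i, -(X i - m0) / (1 - lstar * (X i - m0)) := by
      rw [← Finset.sum_neg_distrib]
      exact Finset.sum_congr rfl fun i _ => by ring
    rw [this, hcrit, neg_zero]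
  set T := ∑ i, (X i - m0) ^ 2 / (1 - lstar * (X i - m0)) with hTdef
  have hST : S + lstar * T = 0 := by
    have hsplit : ∀ i, (X i - m0) / (1 - lstar * (X i - m0))
        = (X i - m0) + lstar * ((X i - m0) ^ 2 / (1 - lstar * (X i - m0))) := by
      intro i
      rw [div_eq_iff (hden i).ne', add_mul, mul_div_assoc', div_mul_cancel₀ _ (hden i).ne']
      ring
    calc S + lstar * T
        = ∑ i, ((X i - m0) + lstar * ((X i - m0) ^ 2 / (1 - lstar * (X i - m0)))) := by
          rw [hS, hTdef, Finset.mul_sum, ← Finset.sum_add_distrib]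
      _ = ∑ i, (X i - m0) / (1 - lstar * (X i - m0)) :=
          Finset.sum_congr rfl fun i _ => (hsplit i).symm
      _ = 0 := h0
  have hTge : α * V ≤ T := by
    rw [hV, Finset.mul_sum]
    apply Finset.sum_le_sum
    intro i _
    rw [le_div_iff₀ (hden i)]
    nlinarith [sq_nonneg (X i - m0), hαkey i, hden i]
  have hTpos : 0 < T := lt_of_lt_of_le (by positivity) hTge
  have habs : |lstar| * T = |S| := by
    have : lstar * T = -S := by linarith
    calc |lstar| * T = |lstar * T| := by rw [abs_mul, abs_of_pos hTpos]
      _ = |S| := by rw [this, abs_neg]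
  have hlbound : |lstar| * (α * V) ≤ |S| := by
    calc |lstar| * (α * V) ≤ |lstar| * T :=
          mul_le_mul_of_nonneg_left hTge (abs_nonneg _)
      _ = |S| := habs
  -- first inequality
  have hlog : ∑ i, Real.log (1 - lstar * (X i - m0)) ≤ |lstar| * |S| := by
    have h1 : ∑ i, Real.log (1 - lstar * (X i - m0)) ≤ ∑ i, -(lstar * (X i - m0)) := by
      apply Finset.sum_le_sum
      intro i _
      have := Real.log_le_sub_one_of_pos (hden i)
      linarith
    have h2 : ∑ i, -(lstar * (X i - m0)) = -(lstar * S) := by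
      rw [hS, Finset.mul_sum, ← Finset.sum_neg_distrib]
    have h3 : -(lstar * S) ≤ |lstar| * |S| := by
      calc -(lstar * S) ≤ |-(lstar * S)| := le_abs_self _
        _ = |lstar| * |S| := by rw [abs_neg, abs_mul]
    linarith
  -- second inequality
  have hαV : 0 < α * V := by positivity
  have hα2V : 0 < α ^ 2 * V := by positivity
  have hsecond : |lstar| * |S| ≤ S ^ 2 / (α ^ 2 * V) := by
    have h1 : |lstar| ≤ |S| / (α * V) := (le_div_iff₀ hαV).mpr hlbound
    have h2 : |lstar| * |S| ≤ |S| / (α * V) * |S| :=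
      mul_le_mul_of_nonneg_right h1 (abs_nonneg _)
    have h3 : |S| / (α * V) * |S| = S ^ 2 / (α * V) := by
      rw [div_mul_eq_mul_div, ← sq_abs]
      ring_nf
    have h4 : S ^ 2 / (α * V) ≤ S ^ 2 / (α ^ 2 * V) := by
      apply div_le_div_of_nonneg_left (sq_nonneg _) hα2V
      nlinarith
    linarith
  refine ⟨⟨hlog, hsecond⟩, fun hSlt => ?_⟩
  have hS2 : S ^ 2 < 2 * V := by
    have h2V : (0:ℝ) ≤ 2 * V := by linarith
    have := Real.sq_sqrt h2V
    nlinarith [abs_nonneg S, sq_abs S]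
  have : S ^ 2 / (α ^ 2 * V) ≤ 2 / α ^ 2 := by
    rw [div_le_div_iff₀ hα2V (by positivity)]
    nlinarith [sq_nonneg α]
  linarith
end

section
/- Let m_0 ∈ (0,1), λ_1 > 0, λ_2 < 0 with λ_1 ≤ 1/(1-m_0) and λ_2 ≥ -1/m_0, and π ∈ (0,1). Fix δ ∈ (0, min{m_0, 1-m_0}). Define recursively W_n(λ) = Π_{i=1}^n (1 - λ(X_i - m_0)) and A_{n-1} = π W_{n-1}(λ_1)λ_1 + (1-π)W_{n-1}(λ_2)λ_2, and let P_δ be the law on {0,1}^∞ under which P_δ(X_n = 1 | F_{n-1}) = m_0 + δ if A_{n-1} ≥ 0 and m_0 - δ if A_{n-1} < 0. Then W_n := π W_n(λ_1) + (1-π)W_n(λ_2) is a nonnegative supermartingale under P_δ, and it fails to be a martingale whenever P_δ(A_{n-1} ≠ 0) > 0 for some n. -/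
open MeasureTheory

theorem stmt_18 {Ω : Type*} {m : MeasurableSpace Ω} {μ : Measure Ω}
    [IsProbabilityMeasure μ] (ℱ : Filtration ℕ m)
    (m0 δ π l1 l2 : ℝ) (hm0 : m0 ∈ Set.Ioo (0 : ℝ) 1)
    (hδ : δ ∈ Set.Ioo (0 : ℝ) (min m0 (1 - m0)))
    (hπ : π ∈ Set.Ioo (0 : ℝ) 1)
    (hl1 : 0 < l1) (hl1' : l1 ≤ 1 / (1 - m0))
    (hl2 : l2 < 0) (hl2' : -(1 / m0) ≤ l2)
    (X : ℕ → Ω → ℝ) (hadapted : Adapted ℱ X)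
    (hX : ∀ n ω, X n ω = 0 ∨ X n ω = 1)
    (W : ℝ → ℕ → Ω → ℝ)
    (hWdef : ∀ l n ω, W l n ω = ∏ i ∈ Finset.range n, (1 - l * (X (i + 1) ω - m0)))
    (A : ℕ → Ω → ℝ)
    (hA : ∀ n ω, A n ω = π * W l1 n ω * l1 + (1 - π) * W l2 n ω * l2)
    (hmean : ∀ n, μ[X (n + 1) | ℱ n] =ᵐ[μ]
      fun ω => if 0 ≤ A n ω then m0 + δ else m0 - δ)
    (Wmix : ℕ → Ω → ℝ)
    (hWmix : ∀ n ω, Wmix n ω = π * W l1 n ω + (1 - π) * W l2 n ω) :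
    Supermartingale Wmix ℱ μ ∧
      ((∃ n, 0 < μ {ω | A n ω ≠ 0}) → ¬ Martingale Wmix ℱ μ) := by
  obtain ⟨hm0l, hm0r⟩ := hm0
  obtain ⟨hδ0, _⟩ := hδ
  -- bound on X
  have hXb : ∀ n ω, |X n ω - m0| ≤ 1 := by
    intro n ω
    rcases hX n ω with h | h <;> rw [h, abs_le] <;> constructor <;> linarith
  -- measurability of W
  have hWmeas : ∀ l n, StronglyMeasurable[ℱ n] (W l n) := by
    intro l n
    have h : W l n = fun ω => ∏ i ∈ Finset.range n, (1 - l * (X (i + 1) ω - m0)) :=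
      funext (hWdef l n)
    rw [h]
    apply Finset.stronglyMeasurable_fun_prod
    intro i hi
    have hi' : i + 1 ≤ n := Finset.mem_range.mp hi
    exact stronglyMeasurable_const.sub
      (stronglyMeasurable_const.mul
        (((hadapted (i + 1)).stronglyMeasurable.mono (ℱ.mono hi')).sub stronglyMeasurable_const))
  -- boundedness of W
  have hWb : ∀ l n ω, |W l n ω| ≤ (1 + |l|) ^ n := by
    intro l n ω
    rw [hWdef, Finset.abs_prod]
    calc ∏ i ∈ Finset.range n, |1 - l * (X (i + 1) ω - m0)|
        ≤ ∏ _i ∈ Finset.range n, (1 + |l|) := by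
          apply Finset.prod_le_prod (fun i _ => abs_nonneg _)
          intro i _
          calc |1 - l * (X (i + 1) ω - m0)| ≤ |(1:ℝ)| + |l * (X (i + 1) ω - m0)| :=
                abs_sub _ _
            _ ≤ 1 + |l| := by
                rw [abs_one, abs_mul]
                have := hXb (i + 1) ω
                nlinarith [abs_nonneg l]
      _ = (1 + |l|) ^ n := by simp
  have hWint : ∀ l n, Integrable (W l n) μ := by
    intro l n
    refine ⟨((hWmeas l n).mono (ℱ.le n)).aestronglyMeasurable, ?_⟩
    exact HasFiniteIntegral.of_bounded (C := (1 + |l|) ^ n)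
      (Filter.Eventually.of_forall fun ω => by
        simpa [Real.norm_eq_abs] using hWb l n ω)
  -- measurability and integrability of Wmix, A
  have hWmixmeas : ∀ n, StronglyMeasurable[ℱ n] (Wmix n) := by
    intro n
    have h : Wmix n = fun ω => π * W l1 n ω + (1 - π) * W l2 n ω := funext (hWmix n)
    rw [h]
    exact (stronglyMeasurable_const.mul (hWmeas l1 n)).add
      (stronglyMeasurable_const.mul (hWmeas l2 n))
  have hAmeas : ∀ n, StronglyMeasurable[ℱ n] (A n) := by
    intro n
    have h : A n = fun ω => π * W l1 n ω * l1 + (1 - π) * W l2 n ω * l2 := funext (hA n)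
    rw [h]
    exact ((stronglyMeasurable_const.mul (hWmeas l1 n)).mul stronglyMeasurable_const).add
      ((stronglyMeasurable_const.mul (hWmeas l2 n)).mul stronglyMeasurable_const)
  have hWmixint : ∀ n, Integrable (Wmix n) μ := by
    intro n
    have h : Wmix n = fun ω => π * W l1 n ω + (1 - π) * W l2 n ω := funext (hWmix n)
    rw [h]
    exact ((hWint l1 n).const_mul π).add ((hWint l2 n).const_mul (1 - π))
  have hXint : ∀ n, Integrable (X n) μ := by
    intro n
    refine ⟨((hadapted n).stronglyMeasurable.mono (ℱ.le n)).aestronglyMeasurable, ?_⟩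
    exact HasFiniteIntegral.of_bounded (C := 1)
      (Filter.Eventually.of_forall fun ω => by
        rcases hX n ω with h | h <;> simp [h, Real.norm_eq_abs])
  have hXmint : ∀ n, Integrable (fun ω => X n ω - m0) μ := fun n =>
    (hXint n).sub (integrable_const m0)
  have hAXint : ∀ n, Integrable (fun ω => A n ω * (X (n + 1) ω - m0)) μ := by
    intro n
    refine ⟨(((hAmeas n).mono (ℱ.le n)).mul
      ((((hadapted (n+1)).stronglyMeasurable.mono (ℱ.le (n+1))).sub stronglyMeasurable_const))).aestronglyMeasurable, ?_⟩
    have hAb : ∀ ω, |A n ω| ≤ π * (1 + |l1|) ^ n * |l1| + (1 - π) * (1 + |l2|) ^ n * |l2| := by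
      intro ω
      rw [hA]
      calc |π * W l1 n ω * l1 + (1 - π) * W l2 n ω * l2|
          ≤ |π * W l1 n ω * l1| + |(1 - π) * W l2 n ω * l2| := abs_add_le _ _
        _ ≤ π * (1 + |l1|) ^ n * |l1| + (1 - π) * (1 + |l2|) ^ n * |l2| := by
            rw [abs_mul, abs_mul, abs_mul, abs_mul,
              abs_of_pos hπ.1, abs_of_pos (by linarith [hπ.2] : (0:ℝ) < 1 - π)]
            have b1 : π * |W l1 n ω| * |l1| ≤ π * (1 + |l1|) ^ n * |l1| :=
              mul_le_mul_of_nonneg_right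
                (mul_le_mul_of_nonneg_left (hWb l1 n ω) hπ.1.le) (abs_nonneg l1)
            have b2 : (1 - π) * |W l2 n ω| * |l2| ≤ (1 - π) * (1 + |l2|) ^ n * |l2| :=
              mul_le_mul_of_nonneg_right
                (mul_le_mul_of_nonneg_left (hWb l2 n ω) (by linarith [hπ.2])) (abs_nonneg l2)
            linarith
    exact HasFiniteIntegral.of_bounded
      (C := (π * (1 + |l1|) ^ n * |l1| + (1 - π) * (1 + |l2|) ^ n * |l2|) * 1)
      (Filter.Eventually.of_forall fun ω => by
        rw [Real.norm_eq_abs, abs_mul]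
        have h1 := hAb ω
        have h2 := hXb (n + 1) ω
        nlinarith [abs_nonneg (A n ω), abs_nonneg (X (n + 1) ω - m0)])
  -- recursion
  have hrec : ∀ n, Wmix (n + 1) = Wmix n - fun ω => A n ω * (X (n + 1) ω - m0) := by
    intro n
    funext ω
    simp only [Pi.sub_apply, hWmix, hA, hWdef, Finset.prod_range_succ]
    ring
  -- key conditional expectation computation
  have hkey : ∀ n, μ[Wmix (n + 1) | ℱ n] =ᵐ[μ] fun ω => Wmix n ω - δ * |A n ω| := by
    intro n
    rw [hrec n]
    have h1 : μ[Wmix n - (fun ω => A n ω * (X (n + 1) ω - m0)) | ℱ n]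
        =ᵐ[μ] μ[Wmix n | ℱ n] - μ[fun ω => A n ω * (X (n + 1) ω - m0) | ℱ n] :=
      condExp_sub (hWmixint n) (hAXint n) _
    have h2 : μ[Wmix n | ℱ n] = Wmix n :=
      condExp_of_stronglyMeasurable (ℱ.le n) (hWmixmeas n) (hWmixint n)
    have h3 : μ[fun ω => A n ω * (X (n + 1) ω - m0) | ℱ n]
        =ᵐ[μ] A n * μ[fun ω => X (n + 1) ω - m0 | ℱ n] :=
      condExp_mul_of_stronglyMeasurable_left (hAmeas n) (hAXint n) (hXmint (n + 1))
    have h4 : μ[fun ω => X (n + 1) ω - m0 | ℱ n]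
        =ᵐ[μ] μ[X (n + 1) | ℱ n] - fun _ => m0 := by
      have := condExp_sub (μ := μ) (m := ℱ n) (hXint (n + 1)) (integrable_const m0)
      rw [condExp_const (ℱ.le n)] at this; exact this
    filter_upwards [h1, h3, h4, hmean n] with ω e1 e3 e4 e5
    rw [e1]
    simp only [Pi.sub_apply, Pi.mul_apply, e3, e4, e5, h2]
    by_cases h : 0 ≤ A n ω
    · simp only [h, if_true, abs_of_nonneg h]; ring
    · push_neg at h
      simp only [not_le.mpr h, if_false, abs_of_neg h]; ring
  have hsuper : Supermartingale Wmix ℱ μ := by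
    refine supermartingale_nat (fun n => hWmixmeas n) hWmixint ?_
    intro n
    filter_upwards [hkey n] with ω h
    rw [h]
    nlinarith [abs_nonneg (A n ω)]
  refine ⟨hsuper, ?_⟩
  rintro ⟨n, hn⟩ hM
  have hmart := hM.condExp_ae_eq (Nat.le_succ n)
  have hzero : ∀ᵐ ω ∂μ, A n ω = 0 := by
    filter_upwards [hkey n, hmart] with ω h1 h2
    rw [h2] at h1
    have : δ * |A n ω| = 0 := by linarith [h1.symm ▸ (rfl : Wmix n ω = Wmix n ω), (by linarith [h1] : δ * |A n ω| = 0)]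
    have habs : |A n ω| = 0 := by
      by_contra hc
      have := abs_nonneg (A n ω)
      nlinarith [lt_of_le_of_ne this (Ne.symm hc)]
    exact abs_eq_zero.mp habs
  rw [ae_iff] at hzero
  exact hn.ne' hzero
end
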